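/- Let q > 2 (or q ≥ 2) and R < 2^{1/q - 1}. If v_1,...,v_n are vectors in ℓ^q with ‖v_i‖_q ≤ R for all i and ‖v_i - v_j‖_q ≥ 1 for all i ≠ j, then n ≤ ⌊1/(1 - 2^{q-1}R^q)⌋. -/

import Mathlib

/-!
Separation gives `∑ᵢ ∑ⱼ ‖vᵢ - vⱼ‖ ^ q ≥ n (n - 1)`, while for `q ≥ 2` every `ℓ^q` family satisfies
`∑ᵢ ∑ⱼ ‖vᵢ - vⱼ‖ ^ q ≤ 2 ^ (q - 1) n ∑ᵢ ‖vᵢ‖ ^ q ≤ 2 ^ (q - 1) n² R ^ q`; hence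
`n - 1 ≤ 2 ^ (q - 1) R ^ q n`. The middle inequality is checked coordinatewise: for the signed
power `φ t = sgn t |t| ^ (q / 2)` one has `|a - b| ^ q ≤ 2 ^ (q - 2) (φ a - φ b) ^ 2`, and
`∑ᵢ ∑ⱼ (xᵢ - xⱼ) ^ 2 = 2 n ∑ᵢ xᵢ ^ 2 - 2 (∑ᵢ xᵢ) ^ 2` with `φ(aᵢ) ^ 2 = |aᵢ| ^ q`.
-/

open Real Finset

noncomputable def signedRpow (s t : ℝ) : ℝ := if 0 ≤ t then t ^ s else -((-t) ^ s)

lemma signedRpow_of_nonneg (s : ℝ) {t : ℝ} (ht : 0 ≤ t) : signedRpow s t = t ^ s := if_pos ht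

lemma signedRpow_of_neg (s : ℝ) {t : ℝ} (ht : t < 0) : signedRpow s t = -((-t) ^ s) :=
  if_neg ht.not_ge

lemma signedRpow_neg {s : ℝ} (hs : s ≠ 0) (t : ℝ) : signedRpow s (-t) = -signedRpow s t := by
  rcases lt_trichotomy t 0 with ht | rfl | ht
  · rw [signedRpow_of_nonneg s (by linarith), signedRpow_of_neg s ht, neg_neg]
  · simp [signedRpow, zero_rpow hs]
  · rw [signedRpow_of_neg s (by linarith), signedRpow_of_nonneg s ht.le, neg_neg]

lemma sq_signedRpow (s t : ℝ) : signedRpow s t ^ 2 = |t| ^ (2 * s) := by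
  rw [mul_comm, rpow_mul (abs_nonneg t), rpow_two]
  rcases le_or_gt 0 t with ht | ht
  · rw [signedRpow_of_nonneg s ht, abs_of_nonneg ht]
  · rw [signedRpow_of_neg s ht, abs_of_neg ht, neg_sq]

lemma rpow_sub_le_rpow_sub_rpow {s a b : ℝ} (hs : 1 ≤ s) (hb : 0 ≤ b) (hba : b ≤ a) :
    (a - b) ^ s ≤ a ^ s - b ^ s := by
  have := add_rpow_le_rpow_add (sub_nonneg.2 hba) hb hs
  rw [sub_add_cancel] at this
  linarith

lemma rpow_add_le_two_rpow_mul_add_rpow {s a b : ℝ} (hs : 1 ≤ s) (ha : 0 ≤ a) (hb : 0 ≤ b) :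
    (a + b) ^ s ≤ 2 ^ (s - 1) * (a ^ s + b ^ s) := by
  lift a to NNReal using ha
  lift b to NNReal using hb
  exact_mod_cast NNReal.rpow_add_le_mul_rpow_add_rpow a b hs

/-- Points of the same sign are handled by superadditivity of `t ↦ t ^ s`, points of opposite
signs by its convexity. -/
lemma abs_sub_rpow_le_two_rpow_mul_abs_sub_signedRpow {s : ℝ} (hs : 1 ≤ s) (a b : ℝ) :
    |a - b| ^ s ≤ 2 ^ (s - 1) * |signedRpow s a - signedRpow s b| := by
  wlog hba : b ≤ a generalizing a b
  · simpa only [abs_sub_comm] using this b a (le_of_not_ge hba)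
  have same_sign {a b : ℝ} (hb : 0 ≤ b) (hba : b ≤ a) :
      |a - b| ^ s ≤ 2 ^ (s - 1) * |signedRpow s a - signedRpow s b| := by
    rw [signedRpow_of_nonneg s (hb.trans hba), signedRpow_of_nonneg s hb,
      abs_of_nonneg (sub_nonneg.2 hba),
      abs_of_nonneg (sub_nonneg.2 (rpow_le_rpow hb hba (by linarith)))]
    calc (a - b) ^ s ≤ a ^ s - b ^ s := rpow_sub_le_rpow_sub_rpow hs hb hba
      _ ≤ 2 ^ (s - 1) * (a ^ s - b ^ s) := le_mul_of_one_le_left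
          (sub_nonneg.2 (rpow_le_rpow hb hba (by linarith))) (one_le_rpow one_le_two (by linarith))
  rcases le_or_gt 0 b with hb | hb
  · exact same_sign hb hba
  rcases le_or_gt a 0 with ha | ha
  · have hs0 : s ≠ 0 := by positivity
    have := same_sign (neg_nonneg.2 ha) (neg_le_neg hba)
    rwa [signedRpow_neg hs0, signedRpow_neg hs0, neg_sub_neg, neg_sub_neg] at this
  · rw [signedRpow_of_nonneg s ha.le, signedRpow_of_neg s hb, sub_neg_eq_add,
      abs_of_nonneg (by linarith), sub_eq_add_neg,
      abs_of_nonneg (add_nonneg (rpow_nonneg ha.le s) (rpow_nonneg (by linarith) s))]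
    exact rpow_add_le_two_rpow_mul_add_rpow hs ha.le (by linarith)

lemma abs_sub_rpow_le_two_rpow_mul_sq {q : ℝ} (hq : 2 ≤ q) (a b : ℝ) :
    |a - b| ^ q ≤ 2 ^ (q - 2) * (signedRpow (q / 2) a - signedRpow (q / 2) b) ^ 2 := by
  have key := abs_sub_rpow_le_two_rpow_mul_abs_sub_signedRpow (s := q / 2) (by linarith) a b
  calc |a - b| ^ q = (|a - b| ^ (q / 2)) ^ 2 := by
        rw [← rpow_mul_natCast (abs_nonneg _)]; norm_num
    _ ≤ (2 ^ (q / 2 - 1) * |signedRpow (q / 2) a - signedRpow (q / 2) b|) ^ 2 := by gcongr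
    _ = 2 ^ (q - 2) * (signedRpow (q / 2) a - signedRpow (q / 2) b) ^ 2 := by
        rw [mul_pow, sq_abs, ← rpow_mul_natCast zero_le_two]; congr 2; ring

lemma sum_sum_sub_sq_le {ι : Type*} (s : Finset ι) (x : ι → ℝ) :
    ∑ i ∈ s, ∑ j ∈ s, (x i - x j) ^ 2 ≤ 2 * #s * ∑ i ∈ s, x i ^ 2 := by
  have : ∑ i ∈ s, ∑ j ∈ s, (x i - x j) ^ 2
      = 2 * #s * ∑ i ∈ s, x i ^ 2 - 2 * (∑ i ∈ s, x i) ^ 2 := by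
    simp only [sub_sq, sum_add_distrib, sum_sub_distrib, sum_const, nsmul_eq_mul, ← mul_sum,
      ← sum_mul]
    ring
  nlinarith [sq_nonneg (∑ i ∈ s, x i)]

lemma sum_sum_abs_sub_rpow_le {ι : Type*} {q : ℝ} (hq : 2 ≤ q) (s : Finset ι) (a : ι → ℝ) :
    ∑ i ∈ s, ∑ j ∈ s, |a i - a j| ^ q ≤ 2 ^ (q - 1) * #s * ∑ i ∈ s, |a i| ^ q := by
  set φ := fun i => signedRpow (q / 2) (a i)
  have hφ (i : ι) : φ i ^ 2 = |a i| ^ q := by rw [sq_signedRpow]; ring_nf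
  calc ∑ i ∈ s, ∑ j ∈ s, |a i - a j| ^ q
      ≤ ∑ i ∈ s, ∑ j ∈ s, 2 ^ (q - 2) * (φ i - φ j) ^ 2 := by
        gcongr with i _ j _; exact abs_sub_rpow_le_two_rpow_mul_sq hq (a i) (a j)
    _ = 2 ^ (q - 2) * ∑ i ∈ s, ∑ j ∈ s, (φ i - φ j) ^ 2 := by simp only [mul_sum]
    _ ≤ 2 ^ (q - 2) * (2 * #s * ∑ i ∈ s, φ i ^ 2) := by gcongr; exact sum_sum_sub_sq_le s φ
    _ = 2 ^ (q - 1) * #s * ∑ i ∈ s, |a i| ^ q := by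
        rw [show q - 1 = q - 2 + 1 by ring, rpow_add_one two_ne_zero]
        simp only [hφ]; ring

lemma lp.sum_sum_norm_sub_rpow_le {ι α : Type*} {p : ENNReal} (hp : 2 ≤ p.toReal)
    (s : Finset ι) (v : ι → lp (fun _ : α => ℝ) p) :
    ∑ i ∈ s, ∑ j ∈ s, ‖v i - v j‖ ^ p.toReal ≤
      2 ^ (p.toReal - 1) * #s * ∑ i ∈ s, ‖v i‖ ^ p.toReal := by
  have hp0 : 0 < p.toReal := by linarith
  have summable (f : lp (fun _ : α => ℝ) p) : Summable fun k => |f k| ^ p.toReal := by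
    simpa only [Real.norm_eq_abs] using (lp.memℓp f).summable hp0
  have norm_rpow (f : lp (fun _ : α => ℝ) p) : ‖f‖ ^ p.toReal = ∑' k, |f k| ^ p.toReal := by
    simpa only [Real.norm_eq_abs] using lp.norm_rpow_eq_tsum hp0 f
  have summable_sub (i j : ι) : Summable fun k => |v i k - v j k| ^ p.toReal := by
    simpa only [lp.coeFn_sub, Pi.sub_apply] using summable (v i - v j)
  calc ∑ i ∈ s, ∑ j ∈ s, ‖v i - v j‖ ^ p.toReal
      = ∑' k, ∑ i ∈ s, ∑ j ∈ s, |v i k - v j k| ^ p.toReal := by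
        simp only [norm_rpow, lp.coeFn_sub, Pi.sub_apply]
        rw [Summable.tsum_finsetSum fun i _ => summable_sum fun j _ => summable_sub i j]
        exact sum_congr rfl fun i _ => (Summable.tsum_finsetSum fun j _ => summable_sub i j).symm
    _ ≤ ∑' k, 2 ^ (p.toReal - 1) * #s * ∑ i ∈ s, |v i k| ^ p.toReal :=
        Summable.tsum_le_tsum (fun k => sum_sum_abs_sub_rpow_le hp s fun i => v i k)
          (summable_sum fun i _ => summable_sum fun j _ => summable_sub i j)
          ((summable_sum fun i _ => summable (v i)).mul_left _)
    _ = 2 ^ (p.toReal - 1) * #s * ∑ i ∈ s, ‖v i‖ ^ p.toReal := by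
        rw [tsum_mul_left, Summable.tsum_finsetSum fun i _ => summable (v i)]
        simp only [norm_rpow]

lemma card_mul_card_sub_one_le_sum_sum {ι : Type*} (s : Finset ι) (d : ι → ι → ℝ)
    (hd : ∀ i ∈ s, 0 ≤ d i i) (hsep : ∀ i ∈ s, ∀ j ∈ s, i ≠ j → 1 ≤ d i j) :
    (#s : ℝ) * (#s - 1) ≤ ∑ i ∈ s, ∑ j ∈ s, d i j := by
  classical
  have row (i) (hi : i ∈ s) : (#s : ℝ) - 1 ≤ ∑ j ∈ s, d i j := by
    rw [← add_sum_erase s _ hi, ← Nat.cast_pred (card_pos.2 ⟨i, hi⟩), ← card_erase_of_mem hi]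
    calc (#(s.erase i) : ℝ) = ∑ j ∈ s.erase i, 1 := by simp
      _ ≤ d i i + ∑ j ∈ s.erase i, d i j := le_add_of_nonneg_of_le (hd i hi)
          (sum_le_sum fun j hj => hsep i hi j (mem_of_mem_erase hj) (ne_of_mem_erase hj).symm)
  calc (#s : ℝ) * (#s - 1) = ∑ i ∈ s, ((#s : ℝ) - 1) := by rw [sum_const, nsmul_eq_mul]
    _ ≤ ∑ i ∈ s, ∑ j ∈ s, d i j := sum_le_sum row

lemma two_rpow_mul_rpow_lt_one {q R : ℝ} (hq : 0 < q) (hR0 : 0 ≤ R)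
    (hR : R < 2 ^ (1 / q - 1)) :
    2 ^ (q - 1) * R ^ q < 1 := by
  calc 2 ^ (q - 1) * R ^ q < 2 ^ (q - 1) * (2 ^ (1 / q - 1)) ^ q := by gcongr
    _ = 1 := by
      rw [← rpow_mul zero_le_two, ← rpow_add two_pos]
      convert rpow_zero (2 : ℝ) using 2
      field_simp; ring

lemma le_floor_one_div_one_sub {n : ℕ} {c : ℝ} (hc : c < 1) (h : (n : ℝ) - 1 ≤ c * n) :
    n ≤ ⌊1 / (1 - c)⌋₊ := by
  apply Nat.le_floor
  rw [le_div_iff₀ (by linarith)]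
  linarith

lemma lp.card_sub_one_le_of_separated {ι α : Type*} [Fintype ι] {p : ENNReal}
    (hp : 2 ≤ p.toReal) {R : ℝ} (v : ι → lp (fun _ : α => ℝ) p) (hball : ∀ i, ‖v i‖ ≤ R)
    (hsep : ∀ i j, i ≠ j → 1 ≤ ‖v i - v j‖) :
    (Fintype.card ι : ℝ) - 1 ≤ 2 ^ (p.toReal - 1) * R ^ p.toReal * Fintype.card ι := by
  rcases (Fintype.card ι).eq_zero_or_pos with hN | hN
  · simp [hN]
  set N : ℝ := (Fintype.card ι : ℝ)
  have hp0 : 0 ≤ p.toReal := by linarith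
  have : N * (N - 1) ≤ N * (2 ^ (p.toReal - 1) * R ^ p.toReal * N) := calc
    N * (N - 1) ≤ ∑ i, ∑ j, ‖v i - v j‖ ^ p.toReal :=
        card_mul_card_sub_one_le_sum_sum _ _ (fun _ _ => rpow_nonneg (lp.norm_nonneg' _) _)
          fun i _ j _ hij => one_le_rpow (hsep i j hij) hp0
    _ ≤ 2 ^ (p.toReal - 1) * N * ∑ i, ‖v i‖ ^ p.toReal := lp.sum_sum_norm_sub_rpow_le hp _ v
    _ ≤ 2 ^ (p.toReal - 1) * N * ∑ _i : ι, R ^ p.toReal := by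
        gcongr with i; exacts [lp.norm_nonneg' _, hball i]
    _ = N * (2 ^ (p.toReal - 1) * R ^ p.toReal * N) := by
        rw [sum_const, nsmul_eq_mul, card_univ]; ring
  exact le_of_mul_le_mul_left this (Nat.cast_pos.2 hN)

theorem stmt_9_general (q R : ℝ) (hq : 2 ≤ q)
    (hR : R < 2 ^ (1 / q - 1)) (n : ℕ)
    (v : Fin n → lp (fun _ : ℕ => ℝ) (ENNReal.ofReal q))
    (hball : ∀ i, ‖v i‖ ≤ R)
    (hsep : ∀ i j, i ≠ j → 1 ≤ ‖v i - v j‖) :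
    n ≤ ⌊1 / (1 - 2 ^ (q - 1) * R ^ q)⌋₊ := by
  rcases n.eq_zero_or_pos with rfl | hn
  · exact Nat.zero_le _
  have hR0 : 0 ≤ R := (lp.norm_nonneg' _).trans (hball ⟨0, hn⟩)
  have hp : (ENNReal.ofReal q).toReal = q := ENNReal.toReal_ofReal (by linarith)
  have key := lp.card_sub_one_le_of_separated (by rwa [hp]) v hball hsep
  rw [hp, Fintype.card_fin] at key
  exact le_floor_one_div_one_sub (two_rpow_mul_rpow_lt_one (by linarith) hR0 hR) key

/-- Packing bound in `ℓ^q` for `q ≥ 2`: if `v₁,…,vₙ` lie in the closed ball of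
radius `R < 2^{1/q - 1}` and are pairwise `1`-separated, then
`n ≤ ⌊1/(1 - 2^{q-1} R^q)⌋`. -/
theorem stmt_9 (q R : ℝ) (hq : 2 ≤ q) (hR0 : 0 < R)
    (hR : R < 2 ^ (1 / q - 1)) (n : ℕ)
    (v : Fin n → lp (fun _ : ℕ => ℝ) (ENNReal.ofReal q))
    (hball : ∀ i, ‖v i‖ ≤ R)
    (hsep : ∀ i j, i ≠ j → 1 ≤ ‖v i - v j‖) :
    n ≤ ⌊1 / (1 - 2 ^ (q - 1) * R ^ q)⌋₊ :=
  stmt_9_general q R hq hR n v hball hsep
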